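/- arXiv:2409.18220 — 2 statements merged into one kernel-verified Lean document; each statement's English description precedes it below -/
import Mathlib

section
/- Let G be a finite simple graph and let H_1, …, H_k be pairwise vertex-disjoint induced subgraphs of G. Then s^+(G) ≥ Σ_{i=1}^k s^+(H_i). -/
/-!
For a real symmetric matrix `A` and any positive semidefinite `C`,
`2 tr(AC) - tr(C²) ≤ s⁺(A)`: in an eigenbasis of `A` the diagonal entries `b` of `C` are
nonnegative, `2λb - b² ≤ (max λ 0)²`, and `tr(C²)` is at least the sum of the squared diagonal
entries. Taking for `C` the block matrix whose blocks are the positive parts of the adjacency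
matrices of the `Hᵢ`, padded by zero, disjointness gives `tr(A(G) C) = tr(C²) = ∑ s⁺(Hᵢ)`.
-/

open Matrix

variable {V : Type*}

/-- The real adjacency matrix of a simple graph is Hermitian. -/
lemma adjMatrix_isHermitian [Fintype V] [DecidableEq V] (G : SimpleGraph V)
    [DecidableRel G.Adj] : (G.adjMatrix ℝ).IsHermitian := by
  rw [Matrix.IsHermitian, Matrix.conjTranspose_eq_transpose_of_trivial]
  exact G.isSymm_adjMatrix

/-- The eigenvalues of the adjacency matrix of `G`, as a function indexed by the vertices. -/
noncomputable def adjEigenvalues [Fintype V] [DecidableEq V] (G : SimpleGraph V) : V → ℝ :=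
  letI := Classical.decRel G.Adj
  (adjMatrix_isHermitian G).eigenvalues

/-- The energy of a graph: the sum of the absolute values of its eigenvalues. -/
noncomputable def graphEnergy [Fintype V] [DecidableEq V] (G : SimpleGraph V) : ℝ :=
  ∑ i, |adjEigenvalues G i|

/-- The positive square energy `s⁺(G)`: the sum of squares of the positive eigenvalues. -/
noncomputable def sPlus [Fintype V] [DecidableEq V] (G : SimpleGraph V) : ℝ :=
  ∑ i, if 0 < adjEigenvalues G i then (adjEigenvalues G i) ^ 2 else 0

/-- The negative square energy `s⁻(G)`: the sum of squares of the negative eigenvalues. -/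
noncomputable def sMinus [Fintype V] [DecidableEq V] (G : SimpleGraph V) : ℝ :=
  ∑ i, if adjEigenvalues G i < 0 then (adjEigenvalues G i) ^ 2 else 0

/-- The largest adjacency eigenvalue `λ₁(G)` (for a graph with a nonempty vertex set). -/
noncomputable def maxEig [Fintype V] [DecidableEq V] (G : SimpleGraph V) : ℝ :=
  ⨆ i, adjEigenvalues G i

/-- The smallest adjacency eigenvalue `λₙ(G)` (for a graph with a nonempty vertex set). -/
noncomputable def minEig [Fintype V] [DecidableEq V] (G : SimpleGraph V) : ℝ :=
  ⨅ i, adjEigenvalues G i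

lemma two_mul_mul_sub_sq_le {x b : ℝ} (hb : 0 ≤ b) :
    2 * (x * b) - b ^ 2 ≤ if 0 < x then x ^ 2 else 0 := by
  split_ifs with hx
  · nlinarith [sq_nonneg (x - b)]
  · nlinarith [sq_nonneg b]

lemma mul_max_zero_eq_ite (x : ℝ) : x * max x 0 = if 0 < x then x ^ 2 else 0 := by
  split_ifs with hx
  · rw [max_eq_left hx.le, sq]
  · rw [max_eq_right (not_lt.mp hx), mul_zero]

namespace Matrix

section Trace

variable {m n p R : Type*} [Fintype m] [Fintype n] [Fintype p] [CommSemiring R] [StarRing R]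

lemma trace_conjStarAlgAut [DecidableEq n] (u : unitary (Matrix n n R)) (X : Matrix n n R) :
    trace (Unitary.conjStarAlgAut R _ u X) = trace X := by
  rw [Unitary.conjStarAlgAut_apply, trace_mul_cycle, Unitary.coe_star_mul_self, one_mul]

lemma trace_conjTranspose_mul_mul_mul (S : Matrix m n R) (S' : Matrix p n R)
    (M : Matrix m m R) (N : Matrix p p R) :
    trace (Sᴴ * M * S * (S'ᴴ * N * S')) = trace (M * (S * S'ᴴ) * N * (S' * Sᴴ)) := by
  rw [Matrix.mul_assoc Sᴴ, Matrix.mul_assoc Sᴴ, trace_mul_comm]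
  simp only [Matrix.mul_assoc]

lemma trace_mul_conjTranspose_mul_mul (A : Matrix n n R) (S : Matrix m n R) (M : Matrix m m R) :
    trace (A * (Sᴴ * M * S)) = trace (S * A * Sᴴ * M) := by
  rw [← Matrix.mul_assoc, trace_mul_comm]
  simp only [Matrix.mul_assoc]

lemma trace_sum_mul_sum_of_orthogonal [DecidableEq n] {ι : Type*} [Fintype ι] [DecidableEq ι]
    {κ : ι → Type*} [∀ i, Fintype (κ i)] [∀ i, DecidableEq (κ i)] (S : ∀ i, Matrix (κ i) n R)
    (hS : ∀ i, S i * (S i)ᴴ = 1) (hS' : ∀ i j, i ≠ j → S i * (S j)ᴴ = 0)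
    (M : ∀ i, Matrix (κ i) (κ i) R) :
    trace ((∑ i, (S i)ᴴ * M i * S i) * ∑ i, (S i)ᴴ * M i * S i) = ∑ i, trace (M i * M i) := by
  rw [Finset.sum_mul_sum, trace_sum]
  refine Finset.sum_congr rfl fun i _ => ?_
  have h_cross (j : ι) (hji : j ≠ i) : trace ((S i)ᴴ * M i * S i * ((S j)ᴴ * M j * S j)) = 0 := by
    rw [trace_conjTranspose_mul_mul_mul, hS' i j hji.symm]
    simp
  rw [trace_sum, Finset.sum_eq_single i (fun j _ => h_cross j) (by simp),
    trace_conjTranspose_mul_mul_mul, hS, Matrix.mul_one, Matrix.mul_one]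

end Trace

section Selection

variable {m n p R : Type*} [DecidableEq n]

lemma one_submatrix_eq_zero [Zero R] [One R] {e : m → n} {e' : p → n} (h : ∀ a b, e a ≠ e' b) :
    (1 : Matrix n n R).submatrix e e' = 0 := by
  ext a b
  simp [h a b]

variable [Fintype n] [CommSemiring R] [StarRing R]

lemma one_submatrix_mul_conjTranspose_one_submatrix (e : m → n) (e' : p → n) :
    (1 : Matrix n n R).submatrix e id * ((1 : Matrix n n R).submatrix e' id)ᴴ
      = (1 : Matrix n n R).submatrix e e' := by
  ext a b
  simp [mul_apply, one_apply]

lemma one_submatrix_mul_mul_conjTranspose (A : Matrix n n R) (e : m → n) :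
    (1 : Matrix n n R).submatrix e id * A * ((1 : Matrix n n R).submatrix e id)ᴴ
      = A.submatrix e e := by
  ext a b
  simp [mul_apply, one_apply]

end Selection

lemma sum_sq_diag_le_trace_mul_self {n : Type*} [Fintype n] {B : Matrix n n ℝ}
    (hB : B.IsHermitian) : ∑ i, B i i ^ 2 ≤ trace (B * B) := by
  have hsymm (i j : n) : B j i = B i j := by simpa using congrFun (congrFun hB i) j
  calc ∑ i, B i i ^ 2 ≤ ∑ i, ∑ j, B i j ^ 2 := Finset.sum_le_sum fun i _ =>
        Finset.single_le_sum (f := fun j => B i j ^ 2) (fun j _ => sq_nonneg _) (Finset.mem_univ i)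
    _ = trace (B * B) := by simp only [trace, diag, mul_apply, sq, hsymm]

namespace IsHermitian

variable {n : Type*} [Fintype n] [DecidableEq n]

section RCLike

variable {𝕜 : Type*} [RCLike 𝕜] {A : Matrix n n 𝕜} (hA : A.IsHermitian)

lemma cfc_id_eq : hA.cfc id = A := by
  conv_rhs => rw [hA.spectral_theorem]
  rfl

lemma trace_cfc_mul_cfc (f g : ℝ → ℝ) :
    trace (hA.cfc f * hA.cfc g) = ∑ i, (f (hA.eigenvalues i) * g (hA.eigenvalues i) : 𝕜) := by
  rw [IsHermitian.cfc, IsHermitian.cfc, ← map_mul, trace_conjStarAlgAut, diagonal_mul_diagonal,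
    trace_diagonal]
  simp

open scoped ComplexOrder in
lemma posSemidef_cfc {f : ℝ → ℝ} (hf : ∀ x, 0 ≤ f x) : (hA.cfc f).PosSemidef := by
  rw [IsHermitian.cfc, Unitary.conjStarAlgAut_apply,
    Unitary.isUnit_coe.posSemidef_star_right_conjugate_iff, posSemidef_diagonal_iff]
  intro i
  simpa using hf _

end RCLike

section Real

variable {A : Matrix n n ℝ} (hA : A.IsHermitian)

noncomputable def posSqSum : ℝ :=
  ∑ i, if 0 < hA.eigenvalues i then hA.eigenvalues i ^ 2 else 0

lemma trace_mul_cfc_max_zero : trace (A * hA.cfc (max · 0)) = hA.posSqSum := by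
  have h := hA.trace_cfc_mul_cfc id (max · 0)
  rw [hA.cfc_id_eq] at h
  rw [h]
  exact Finset.sum_congr rfl fun i _ => mul_max_zero_eq_ite _

lemma trace_cfc_max_zero_mul_self :
    trace (hA.cfc (max · 0) * hA.cfc (max · 0)) = hA.posSqSum := by
  rw [trace_cfc_mul_cfc]
  refine Finset.sum_congr rfl fun i _ => ?_
  rw [← mul_max_zero_eq_ite]
  rcases le_total (hA.eigenvalues i) 0 with h | h <;> simp [h]

theorem two_mul_trace_mul_sub_trace_mul_self_le {C : Matrix n n ℝ} (hC : C.PosSemidef) :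
    2 * trace (A * C) - trace (C * C) ≤ hA.posSqSum := by
  set u := hA.eigenvectorUnitary
  set B := (Unitary.conjStarAlgAut ℝ _ u).symm C
  have hB : B.PosSemidef := by
    simpa [B, Unitary.conjStarAlgAut_symm_apply, Matrix.star_eq_conjTranspose] using
      hC.conjTranspose_mul_mul_same (u : Matrix n n ℝ)
  have hC_eq : C = Unitary.conjStarAlgAut ℝ _ u B :=
    ((Unitary.conjStarAlgAut ℝ _ u).apply_symm_apply C).symm
  have hAC : trace (A * C) = ∑ i, hA.eigenvalues i * B i i := by
    calc trace (A * C) = trace (hA.cfc id * Unitary.conjStarAlgAut ℝ _ u B) := by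
          rw [hA.cfc_id_eq, ← hC_eq]
      _ = _ := by
          rw [IsHermitian.cfc, ← map_mul, trace_conjStarAlgAut]
          simp [trace, diagonal_mul]
  have hCC : trace (C * C) = trace (B * B) := by
    rw [hC_eq, ← map_mul, trace_conjStarAlgAut]
  calc 2 * trace (A * C) - trace (C * C)
      ≤ ∑ i, (2 * (hA.eigenvalues i * B i i) - B i i ^ 2) := by
        rw [hAC, hCC, Finset.sum_sub_distrib, ← Finset.mul_sum]
        linarith [sum_sq_diag_le_trace_mul_self hB.1]
    _ ≤ hA.posSqSum := Finset.sum_le_sum fun i _ => two_mul_mul_sub_sq_le hB.diag_nonneg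

end Real

end IsHermitian

end Matrix

lemma sPlus_eq_posSqSum [Fintype V] [DecidableEq V] (G : SimpleGraph V) [DecidableRel G.Adj] :
    sPlus G = (adjMatrix_isHermitian G).posSqSum := by
  obtain rfl : ‹DecidableRel G.Adj› = Classical.decRel G.Adj := Subsingleton.elim _ _
  rfl

lemma SimpleGraph.adjMatrix_induce {α : Type*} [Zero α] [One α] (G : SimpleGraph V)
    [DecidableRel G.Adj] (s : Set V) [DecidableRel (G.induce s).Adj] :
    (G.induce s).adjMatrix α = (G.adjMatrix α).submatrix Subtype.val Subtype.val :=
  ((SimpleGraph.Embedding.induce s).submatrix_adjMatrix α).symm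

/-- If `H₁, …, H_k` are pairwise vertex-disjoint induced subgraphs of `G`,
then `s⁺(G) ≥ ∑ᵢ s⁺(Hᵢ)`. -/
theorem sPlus_ge_sum_sPlus_induced {V : Type*} [Fintype V] [DecidableEq V]
    (G : SimpleGraph V) (k : ℕ) (f : Fin k → Finset V)
    (hdisj : ∀ i j : Fin k, i ≠ j → Disjoint (f i) (f j)) :
    sPlus G ≥ ∑ i : Fin k, sPlus (G.induce (↑(f i) : Set V)) := by
  classical
  let S (i : Fin k) : Matrix (↑(f i) : Set V) V ℝ := (1 : Matrix V V ℝ).submatrix Subtype.val id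
  let P (i : Fin k) := (adjMatrix_isHermitian (G.induce (↑(f i) : Set V))).cfc (max · 0)
  let C := ∑ i, (S i)ᴴ * P i * S i
  have hC : C.PosSemidef := posSemidef_sum _ fun i _ =>
    ((IsHermitian.posSemidef_cfc _ fun _ => le_max_right _ _).conjTranspose_mul_mul_same _)
  have hAC : trace (G.adjMatrix ℝ * C) = ∑ i, sPlus (G.induce (↑(f i) : Set V)) := by
    simp only [C, Matrix.mul_sum, trace_sum, trace_mul_conjTranspose_mul_mul, S,
      one_submatrix_mul_mul_conjTranspose, ← SimpleGraph.adjMatrix_induce, P,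
      IsHermitian.trace_mul_cfc_max_zero, sPlus_eq_posSqSum]
  have hCC : trace (C * C) = ∑ i, sPlus (G.induce (↑(f i) : Set V)) := by
    rw [trace_sum_mul_sum_of_orthogonal S ?_ ?_]
    · simp only [P, IsHermitian.trace_cfc_max_zero_mul_self, sPlus_eq_posSqSum]
    · intro i
      rw [one_submatrix_mul_conjTranspose_one_submatrix, submatrix_one _ Subtype.val_injective]
    · intro i j hij
      rw [one_submatrix_mul_conjTranspose_one_submatrix]
      exact one_submatrix_eq_zero fun a b hab =>
        Finset.disjoint_left.mp (hdisj i j hij) a.2 (hab ▸ b.2)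
  have key := (adjMatrix_isHermitian G).two_mul_trace_mul_sub_trace_mul_self_le hC
  rw [sPlus_eq_posSqSum]
  linarith
end

section
/- Let G be a finite simple graph and let H be an induced subgraph of G. Then s^-(G) ≥ s^-(H). -/
open Matrix

variable {V : Type*}

/-! For a real symmetric matrix `A`, `s⁻(A)` is the squared Frobenius distance from `A` to the cone
of positive semidefinite matrices, attained at the positive part `A⁺`: in the eigenbasis of `A`
only the diagonal entries `λᵢ - yᵢᵢ` with `yᵢᵢ ≥ 0` need be counted. If `B` is a principal
submatrix of `A`, the same compression of `A⁺` is positive semidefinite and lies at distance at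
most `‖A - A⁺‖_F` from `B`, so `s⁻(B) ≤ s⁻(A)`. The adjacency matrix of an induced subgraph is such
a principal submatrix. -/

namespace Matrix

section FrobeniusSq

variable {k l m n : Type*} [Fintype m] [Fintype n]

def frobeniusSq (M : Matrix m n ℝ) : ℝ := ∑ i, ∑ j, M i j ^ 2

lemma frobeniusSq_eq_trace (M : Matrix m n ℝ) : frobeniusSq M = trace (Mᴴ * M) := by
  simp only [frobeniusSq, trace, diag, mul_apply, conjTranspose_apply, star_trivial, sq]
  exact Finset.sum_comm

lemma frobeniusSq_conjStarAlgAut [DecidableEq n] (u : unitaryGroup n ℝ) (M : Matrix n n ℝ) :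
    frobeniusSq (Unitary.conjStarAlgAut ℝ _ u M) = frobeniusSq M := by
  set U : Matrix n n ℝ := (u : Matrix n n ℝ)
  have hU : star U * U = 1 := Unitary.coe_star_mul_self u
  rw [frobeniusSq_eq_trace, frobeniusSq_eq_trace, Unitary.conjStarAlgAut_apply,
    ← star_eq_conjTranspose, ← star_eq_conjTranspose]
  calc trace (star (U * M * star U) * (U * M * star U))
      = trace (U * (star M * (star U * U) * M) * star U) := by
        simp only [star_mul, star_star, Matrix.mul_assoc]
    _ = trace (star M * M) := by
        rw [hU, Matrix.mul_one, trace_mul_cycle, ← Matrix.mul_assoc, hU, Matrix.one_mul]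

lemma frobeniusSq_diagonal [DecidableEq n] (d : n → ℝ) :
    frobeniusSq (diagonal d) = ∑ i, d i ^ 2 := by
  refine Finset.sum_congr rfl fun i _ => ?_
  rw [Finset.sum_eq_single i (fun j _ hji => by simp [diagonal_apply_ne _ hji.symm]) (by simp),
    diagonal_apply_eq]

lemma sum_diag_sq_le_frobeniusSq (M : Matrix n n ℝ) : ∑ i, M i i ^ 2 ≤ frobeniusSq M :=
  Finset.sum_le_sum fun i _ =>
    Finset.single_le_sum (f := fun j => M i j ^ 2) (fun _ _ => sq_nonneg _) (Finset.mem_univ i)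

lemma frobeniusSq_submatrix_le [Fintype k] [Fintype l] (M : Matrix m n ℝ) {f : k → m} {g : l → n}
    (hf : Function.Injective f) (hg : Function.Injective g) :
    frobeniusSq (M.submatrix f g) ≤ frobeniusSq M := by
  have h : frobeniusSq (M.submatrix f g) =
      ∑ i ∈ Finset.univ.map ⟨f, hf⟩, ∑ j ∈ Finset.univ.map ⟨g, hg⟩, M i j ^ 2 := by
    simp [frobeniusSq, Finset.sum_map]
  rw [h]
  refine (Finset.sum_le_sum fun i _ => ?_).trans
    (Finset.sum_le_univ_sum_of_nonneg fun i => Finset.sum_nonneg fun j _ => sq_nonneg _)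
  exact Finset.sum_le_univ_sum_of_nonneg fun j => sq_nonneg _

end FrobeniusSq

namespace IsHermitian

variable {m n : Type*} [Fintype n] [DecidableEq n] {A : Matrix n n ℝ} (hA : A.IsHermitian)

noncomputable def negSquareEnergy : ℝ :=
  ∑ i, if hA.eigenvalues i < 0 then hA.eigenvalues i ^ 2 else 0

noncomputable def posPart : Matrix n n ℝ :=
  Unitary.conjStarAlgAut ℝ _ hA.eigenvectorUnitary (diagonal fun i => max (hA.eigenvalues i) 0)

lemma posPart_posSemidef : hA.posPart.PosSemidef := by
  rw [posPart, Unitary.conjStarAlgAut_apply, star_eq_conjTranspose]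
  exact (PosSemidef.diagonal fun i => le_max_right _ _).mul_mul_conjTranspose_same _

lemma sub_posPart :
    A - hA.posPart =
      Unitary.conjStarAlgAut ℝ _ hA.eigenvectorUnitary
        (diagonal fun i => min (hA.eigenvalues i) 0) := by
  nth_rewrite 1 [hA.spectral_theorem]
  rw [posPart, ← map_sub, diagonal_sub]
  congr 2 with i
  rcases le_total (hA.eigenvalues i) 0 with h | h <;> simp [h]

lemma frobeniusSq_sub_posPart : frobeniusSq (A - hA.posPart) = hA.negSquareEnergy := by
  rw [sub_posPart, frobeniusSq_conjStarAlgAut, frobeniusSq_diagonal, negSquareEnergy]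
  refine Finset.sum_congr rfl fun i _ => ?_
  split_ifs with h
  · rw [min_eq_left h.le]
  · simp [not_lt.1 h]

lemma negSquareEnergy_le_frobeniusSq_sub {Y : Matrix n n ℝ} (hY : Y.PosSemidef) :
    hA.negSquareEnergy ≤ frobeniusSq (A - Y) := by
  set U := hA.eigenvectorUnitary
  set Y' := Unitary.conjStarAlgAut ℝ _ (star U) Y
  have hY' : Y'.PosSemidef := by
    simpa [Y', Unitary.conjStarAlgAut_apply, star_eq_conjTranspose] using
      hY.conjTranspose_mul_mul_same (U : Matrix n n ℝ)
  have hconj : frobeniusSq (A - Y) = frobeniusSq (diagonal hA.eigenvalues - Y') := by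
    rw [← frobeniusSq_conjStarAlgAut (star U), map_sub, hA.conjStarAlgAut_star_eigenvectorUnitary]
    simp [RCLike.ofReal_real_eq_id, Y']
  rw [hconj]
  refine le_trans (Finset.sum_le_sum fun i _ => ?_) (sum_diag_sq_le_frobeniusSq _)
  have hYi : 0 ≤ Y' i i := hY'.diag_nonneg
  simp only [sub_apply, diagonal_apply_eq]
  split_ifs <;> nlinarith

lemma negSquareEnergy_le_of_eq_submatrix [Fintype m] [DecidableEq m] {B : Matrix m m ℝ}
    (hB : B.IsHermitian) {f : m → n} (hf : Function.Injective f) (hBA : B = A.submatrix f f) :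
    hB.negSquareEnergy ≤ hA.negSquareEnergy :=
  calc hB.negSquareEnergy
      ≤ frobeniusSq (B - hA.posPart.submatrix f f) :=
        hB.negSquareEnergy_le_frobeniusSq_sub (hA.posPart_posSemidef.submatrix f)
    _ = frobeniusSq ((A - hA.posPart).submatrix f f) := by rw [hBA]; rfl
    _ ≤ frobeniusSq (A - hA.posPart) := frobeniusSq_submatrix_le _ hf hf
    _ = hA.negSquareEnergy := hA.frobeniusSq_sub_posPart

end IsHermitian

end Matrix

/-- For an induced subgraph `H` of `G`, `s⁻(G) ≥ s⁻(H)`. -/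
theorem sMinus_ge_sMinus_induced {V : Type*} [Fintype V] [DecidableEq V]
    (G : SimpleGraph V) (s : Finset V) :
    sMinus G ≥ sMinus (G.induce (↑s : Set V)) := by
  classical
  refine (adjMatrix_isHermitian G).negSquareEnergy_le_of_eq_submatrix
    (adjMatrix_isHermitian _) Subtype.coe_injective ?_
  ext i j
  simp only [SimpleGraph.adjMatrix_apply, submatrix_apply, SimpleGraph.comap_adj,
    Function.Embedding.coe_subtype]
end
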